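/- arXiv:2203.04108 — 4 statements merged into one kernel-verified Lean document; each statement's English description precedes it below -/
import Mathlib

section
/- For every y ∈ [0,1], the limit as θ* → 0⁺ of F_{θ*}(y) = (y + sin(2θ*(1−y))/(2θ*) − sin(2θ*)/(2θ*)) / (1 − sin(2θ*)/(2θ*)) equals y³ − 3y² + 3y. -/
/-! Writing `ψ_c(t) = (c t - sin (c t)) / t³`, for `t ≠ 0` one has
`Fcum t y = 1 - ψ_{2(1-y)}(t) / ψ_2(t)`, and `ψ_c(t) → c³/6` by the Taylor expansion of `sin`,
so `Fcum t y → 1 - (1-y)³ = y³ - 3y² + 3y`. -/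

open Real Filter

noncomputable def Fcum (t y : ℝ) : ℝ :=
  (y + Real.sin (2 * t * (1 - y)) / (2 * t) - Real.sin (2 * t) / (2 * t)) /
    (1 - Real.sin (2 * t) / (2 * t))

open Topology

lemma tendsto_sub_sin_div_pow_three :
    Tendsto (fun x : ℝ => (x - sin x) / x ^ 3) (𝓝[≠] 0) (𝓝 (1 / 6)) := by
  rw [← tendsto_sub_nhds_zero_iff]
  refine squeeze_zero_norm' (a := fun x => x ^ 2 / 100) ?_ ?_
  · filter_upwards [self_mem_nhdsWithin,
      nhdsWithin_le_nhds (Metric.closedBall_mem_nhds (0 : ℝ) one_pos)] with x hx0 hx1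
    have hx : x ≠ 0 := hx0
    rw [Metric.mem_closedBall, dist_zero_right, Real.norm_eq_abs] at hx1
    have hcubic : (x - sin x) / x ^ 3 - 1 / 6 = -(sin x - (x - x ^ 3 / 6)) / x ^ 3 := by
      field_simp
      ring
    rw [Real.norm_eq_abs, hcubic, abs_div, abs_neg, abs_pow, div_le_iff₀ (by positivity)]
    calc |sin x - (x - x ^ 3 / 6)| ≤ |x| ^ 5 / 100 := sin_bound hx1
      _ = x ^ 2 / 100 * |x| ^ 3 := by rw [← sq_abs x]; ring
  · simpa using ((continuous_pow 2).tendsto (0 : ℝ)).div_const 100 |>.mono_left nhdsWithin_le_nhds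

lemma tendsto_mul_sub_sin_mul_div_pow_three (c : ℝ) :
    Tendsto (fun x : ℝ => (c * x - sin (c * x)) / x ^ 3) (𝓝[≠] 0) (𝓝 (c ^ 3 / 6)) := by
  rcases eq_or_ne c 0 with rfl | hc
  · simp
  have hscale : Tendsto (c * ·) (𝓝[≠] (0 : ℝ)) (𝓝[≠] 0) :=
    tendsto_nhdsWithin_of_tendsto_nhds_of_eventually_within _
      (by simpa using (continuous_const_mul c).tendsto (0 : ℝ) |>.mono_left nhdsWithin_le_nhds)
      (by filter_upwards [self_mem_nhdsWithin] with x hx using mul_ne_zero hc hx)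
  have hlim := (tendsto_sub_sin_div_pow_three.comp hscale).const_mul (c ^ 3)
  rw [show c ^ 3 * (1 / 6) = c ^ 3 / 6 by ring] at hlim
  refine hlim.congr' ?_
  filter_upwards [self_mem_nhdsWithin] with x hx
  simp only [Function.comp_apply]
  field_simp

lemma sub_sin_ne_zero {x : ℝ} (hx : x ≠ 0) : x - sin x ≠ 0 :=
  fun h => (abs_sin_lt_abs hx).ne (congrArg abs (sub_eq_zero.mp h).symm)

lemma Fcum_eq_one_sub_div {t : ℝ} (ht : t ≠ 0) (y : ℝ) :
    Fcum t y = 1 - ((2 * (1 - y) * t - sin (2 * (1 - y) * t)) / t ^ 3) /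
      ((2 * t - sin (2 * t)) / t ^ 3) := by
  have h2t : 2 * t - sin (2 * t) ≠ 0 := sub_sin_ne_zero (mul_ne_zero two_ne_zero ht)
  rw [Fcum, show 2 * (1 - y) * t = 2 * t * (1 - y) by ring]
  field_simp
  ring

lemma tendsto_Fcum (y : ℝ) :
    Tendsto (fun t => Fcum t y) (𝓝[≠] 0) (𝓝 (y ^ 3 - 3 * y ^ 2 + 3 * y)) := by
  have hlim := tendsto_const_nhds (x := (1 : ℝ)).sub
    ((tendsto_mul_sub_sin_mul_div_pow_three (2 * (1 - y))).div
      (tendsto_mul_sub_sin_mul_div_pow_three 2) (by norm_num))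
  rw [show 1 - (2 * (1 - y)) ^ 3 / 6 / (2 ^ 3 / 6) = y ^ 3 - 3 * y ^ 2 + 3 * y by ring] at hlim
  refine hlim.congr' ?_
  filter_upwards [self_mem_nhdsWithin] with t ht
  exact (Fcum_eq_one_sub_div ht y).symm

theorem stmt2_general (y : ℝ) :
    Tendsto (fun t => Fcum t y) (nhdsWithin 0 (Set.Ioi 0))
      (nhds (y ^ 3 - 3 * y ^ 2 + 3 * y)) :=
  (tendsto_Fcum y).mono_left (nhdsWithin_mono _ fun _ ht => ne_of_gt ht)

theorem stmt2 (y : ℝ) (hy : y ∈ Set.Icc (0:ℝ) 1) :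
    Tendsto (fun t => Fcum t y) (nhdsWithin 0 (Set.Ioi 0))
      (nhds (y ^ 3 - 3 * y ^ 2 + 3 * y)) :=
  stmt2_general y
end

section
/- Let λ₊ > 1 be a real number and λ₋ = 1/λ₊. Define ζ(m) = (λ₊^m − λ₋^m)/(λ₊ − λ₋) for m ≥ 0. Then for each fixed n ≥ 0, the limit as M → ∞ of (a² + b²·ζ(M−n−1)² + b²·ζ(M−n)²)/(∑_{k=0}^{M−1} (a² + b²·ζ(M−k−1)² + b²·ζ(M−k)²)) equals (1 − λ₊^{−2})·λ₊^{−2n}, for any reals a, b with b ≠ 0. -/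
/-!
Write `r = λ₊⁻²`. Expanding the squares of `ζ`, the summand `f j = a² + b² ζ(j-1)² + b² ζ(j)²`
has the form `A + B r⁻ʲ + C rʲ` with `B = b² (1 + r) / (λ₊ - λ₊⁻¹)² ≠ 0`. After multiplying by
`r^M`, the numerator `f (M - n)` tends to `B rⁿ`, while the sum `∑_{j ≤ M} f j` becomes
`B (1 + r + ⋯ + r^(M-1))` plus terms of order `M r^M`, so it tends to `B / (1 - r)`.
The quotient therefore tends to `(1 - r) rⁿ`.
-/

open Filter Topology Finset

theorem chebyshev_sq_add_sq {x : ℝ} (hx : x ≠ 0) (m : ℕ) :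
    ((x ^ m - x⁻¹ ^ m) / (x - x⁻¹)) ^ 2 + ((x ^ (m + 1) - x⁻¹ ^ (m + 1)) / (x - x⁻¹)) ^ 2
      = ((1 + x⁻¹ ^ 2) / (x⁻¹ ^ 2) ^ (m + 1) + (1 + x ^ 2) * (x⁻¹ ^ 2) ^ (m + 1) - 4)
          / (x - x⁻¹) ^ 2 := by
  rw [div_pow, div_pow, ← add_div]
  congr 1
  simp only [inv_pow, ← pow_mul]
  field_simp
  ring

namespace GeometricComfortability

variable {r A B C : ℝ} {f : ℕ → ℝ}

theorem mul_pow_eq (hr : r ≠ 0) (hf : ∀ j, 1 ≤ j → f j = A + B / r ^ j + C * r ^ j)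
    {j M : ℕ} (hj : 1 ≤ j) (hjM : j ≤ M) :
    f j * r ^ M = A * r ^ M + B * r ^ (M - j) + C * r ^ j * r ^ M := by
  rw [hf j hj, ← Nat.sub_add_cancel hjM, pow_add, Nat.add_sub_cancel]
  field_simp

theorem tendsto_mul_pow (hr0 : 0 < r) (hr1 : r < 1)
    (hf : ∀ j, 1 ≤ j → f j = A + B / r ^ j + C * r ^ j) (n : ℕ) :
    Tendsto (fun M => f (M - n) * r ^ M) atTop (𝓝 (B * r ^ n)) := by
  have hgeom := tendsto_pow_atTop_nhds_zero_of_lt_one hr0.le hr1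
  have hshift : Tendsto (fun M => r ^ (M - n)) atTop (𝓝 0) :=
    hgeom.comp (tendsto_sub_atTop_nat n)
  have hlim := ((tendsto_const_nhds (x := A)).mul hgeom).add
    ((tendsto_const_nhds (x := B * r ^ n)).add
      ((tendsto_const_nhds (x := C)).mul (hshift.mul hgeom)))
  simp only [mul_zero, zero_add, add_zero] at hlim
  refine hlim.congr' ?_
  filter_upwards [eventually_gt_atTop n] with M hM
  rw [mul_pow_eq hr0.ne' hf (by omega) (Nat.sub_le M n), Nat.sub_sub_self hM.le]
  ring

theorem sum_mul_pow_eq (hr : r ≠ 0) (hf : ∀ j, 1 ≤ j → f j = A + B / r ^ j + C * r ^ j)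
    (M : ℕ) :
    (∑ k ∈ range M, f (M - k)) * r ^ M
      = A * (M * r ^ M) + B * ∑ k ∈ range M, r ^ k
          + C * r * (∑ k ∈ range M, r ^ k) * r ^ M := by
  have hterm : ∀ k ∈ range M,
      f (M - k) * r ^ M = A * r ^ M + B * r ^ k + C * r ^ (M - k) * r ^ M := by
    intro k hk
    rw [mul_pow_eq hr hf (by grind) (Nat.sub_le M k), Nat.sub_sub_self (mem_range.mp hk).le]
  have hreflect : ∑ k ∈ range M, r ^ (M - k) = r * ∑ k ∈ range M, r ^ k := by
    rw [mul_sum, ← sum_range_reflect]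
    refine sum_congr rfl fun k hk => ?_
    rw [← pow_succ']
    congr 1
    grind
  rw [sum_mul, sum_congr rfl hterm, sum_add_distrib, sum_add_distrib, ← sum_mul, ← mul_sum,
    ← sum_mul, ← mul_sum, hreflect, sum_const, card_range, nsmul_eq_mul]
  ring

theorem tendsto_sum_mul_pow (hr0 : 0 < r) (hr1 : r < 1)
    (hf : ∀ j, 1 ≤ j → f j = A + B / r ^ j + C * r ^ j) :
    Tendsto (fun M => (∑ k ∈ range M, f (M - k)) * r ^ M) atTop (𝓝 (B / (1 - r))) := by
  have hgeom := tendsto_pow_atTop_nhds_zero_of_lt_one hr0.le hr1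
  have hpartial : Tendsto (fun M => ∑ k ∈ range M, r ^ k) atTop (𝓝 (1 - r)⁻¹) :=
    (hasSum_geometric_of_lt_one hr0.le hr1).tendsto_sum_nat
  have hlim := (((tendsto_const_nhds (x := A)).mul
      (tendsto_self_mul_const_pow_of_lt_one hr0.le hr1)).add
    ((tendsto_const_nhds (x := B)).mul hpartial)).add
      (((tendsto_const_nhds (x := C * r)).mul hpartial).mul hgeom)
  simp only [mul_zero, zero_add, add_zero] at hlim
  rw [div_eq_mul_inv]
  exact hlim.congr fun M => (sum_mul_pow_eq hr0.ne' hf M).symm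

theorem tendsto_div_sum (hr0 : 0 < r) (hr1 : r < 1) (hB : B ≠ 0)
    (hf : ∀ j, 1 ≤ j → f j = A + B / r ^ j + C * r ^ j) (n : ℕ) :
    Tendsto (fun M => f (M - n) / ∑ k ∈ range M, f (M - k)) atTop (𝓝 ((1 - r) * r ^ n)) := by
  have hquot := (tendsto_mul_pow hr0 hr1 hf n).div (tendsto_sum_mul_pow hr0 hr1 hf)
    (div_ne_zero hB (sub_ne_zero.mpr hr1.ne'))
  have hlimit : B * r ^ n / (B / (1 - r)) = (1 - r) * r ^ n := by
    field_simp [sub_ne_zero.mpr hr1.ne']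
  rw [hlimit] at hquot
  exact hquot.congr fun M => mul_div_mul_right _ _ (pow_ne_zero M hr0.ne')

end GeometricComfortability

theorem stmt6 (lam : ℝ) (hlam : 1 < lam) (ζ : ℕ → ℝ)
    (hζ : ∀ m : ℕ, ζ m = (lam ^ m - lam⁻¹ ^ m) / (lam - lam⁻¹))
    (a b : ℝ) (hb : b ≠ 0) (n : ℕ) :
    Tendsto (fun M : ℕ =>
        (a ^ 2 + b ^ 2 * (ζ (M - n - 1)) ^ 2 + b ^ 2 * (ζ (M - n)) ^ 2) /
          (∑ k ∈ Finset.range M,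
            (a ^ 2 + b ^ 2 * (ζ (M - k - 1)) ^ 2 + b ^ 2 * (ζ (M - k)) ^ 2)))
      atTop (nhds ((1 - lam⁻¹ ^ 2) * lam⁻¹ ^ (2 * n))) := by
  have hlam0 : lam ≠ 0 := (zero_lt_one.trans hlam).ne'
  have hgap : lam - lam⁻¹ ≠ 0 :=
    sub_ne_zero.mpr ((inv_lt_one_of_one_lt₀ hlam).trans hlam).ne'
  have hr0 : 0 < lam⁻¹ ^ 2 := by positivity
  have hr1 : lam⁻¹ ^ 2 < 1 := pow_lt_one₀ (by positivity) (inv_lt_one_of_one_lt₀ hlam) two_ne_zero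
  have hB : b ^ 2 * (1 + lam⁻¹ ^ 2) / (lam - lam⁻¹) ^ 2 ≠ 0 := by positivity
  have hf : ∀ j, 1 ≤ j → a ^ 2 + b ^ 2 * ζ (j - 1) ^ 2 + b ^ 2 * ζ j ^ 2
      = (a ^ 2 - 4 * b ^ 2 / (lam - lam⁻¹) ^ 2)
        + b ^ 2 * (1 + lam⁻¹ ^ 2) / (lam - lam⁻¹) ^ 2 / (lam⁻¹ ^ 2) ^ j
        + b ^ 2 * (1 + lam ^ 2) / (lam - lam⁻¹) ^ 2 * (lam⁻¹ ^ 2) ^ j := by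
    rintro (_ | m) hm
    · omega
    rw [Nat.add_sub_cancel, add_assoc, ← mul_add, hζ, hζ, chebyshev_sq_add_sq hlam0]
    ring
  have hlim := GeometricComfortability.tendsto_div_sum hr0 hr1 hB hf n
  rwa [← pow_mul] at hlim
end

section
/- Let θ* > 0 and a, b be reals with b ≠ 0. For a positive integer M put θ = θ*/M, assume θ ∈ (0, π), and define A_M = (b² + a²·sin²θ)·M − (b²/4)·sin(2Mθ)·sin(2θ)/sin²θ. Then there exist constants c₋, c₊ (depending only on a, b, θ*) such that c₋/M < A_M − M·b²·(1 − sin(2θ*)/(2θ*)) < c₊/M for all sufficiently large M. -/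
open Real

set_option maxHeartbeats 1000000

theorem stmt9 (tstar : ℝ) (htstar : 0 < tstar) (a b : ℝ) (hb : b ≠ 0) :
    ∃ cm cp : ℝ, ∃ M₀ : ℕ, ∀ M : ℕ, M₀ ≤ M →
      let θ := tstar / M
      let A := (b ^ 2 + a ^ 2 * Real.sin θ ^ 2) * M -
        b ^ 2 / 4 * (Real.sin (2 * M * θ) * Real.sin (2 * θ) / Real.sin θ ^ 2)
      cm / M < A - M * b ^ 2 * (1 - Real.sin (2 * tstar) / (2 * tstar)) ∧
        A - M * b ^ 2 * (1 - Real.sin (2 * tstar) / (2 * tstar)) < cp / M := by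
  refine ⟨-(b ^ 2 * tstar / 3 + 1), a ^ 2 * tstar ^ 2 + b ^ 2 * tstar / 3 + 1,
    ⌈tstar⌉₊ + 1, ?_⟩
  intro M hM
  intro θ A
  have hθdef : θ = tstar / M := rfl
  have hAdef : A = (b ^ 2 + a ^ 2 * Real.sin θ ^ 2) * M -
      b ^ 2 / 4 * (Real.sin (2 * M * θ) * Real.sin (2 * θ) / Real.sin θ ^ 2) := rfl
  clear_value θ A
  have hM1 : 1 ≤ M := le_trans (Nat.le_add_left 1 _) hM
  have hMR : (0:ℝ) < M := by exact_mod_cast hM1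
  have htM : tstar < M := by
    have h1 : tstar ≤ (⌈tstar⌉₊ : ℝ) := Nat.le_ceil tstar
    have h2 : (⌈tstar⌉₊ : ℝ) < M := by
      exact_mod_cast Nat.lt_of_lt_of_le (Nat.lt_succ_self _) hM
    linarith
  have hθ0 : 0 < θ := hθdef ▸ div_pos htstar hMR
  have hθ1 : θ < 1 := hθdef ▸ (div_lt_one hMR).mpr htM
  have hθpi2 : θ < π / 2 := by
    have := Real.pi_gt_three
    linarith
  have hsθ : 0 < Real.sin θ := Real.sin_pos_of_pos_of_lt_pi hθ0
    (by have := Real.pi_gt_three; linarith)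
  have hcθ : 0 < Real.cos θ := Real.cos_pos_of_mem_Ioo
    ⟨by linarith [Real.pi_gt_three], hθpi2⟩
  have hMθ : (M : ℝ) * θ = tstar := by
    rw [hθdef]; field_simp
  -- numerator bounds
  have hN0 : 0 ≤ Real.sin θ - θ * Real.cos θ := by
    have ht := Real.lt_tan hθ0 hθpi2
    rw [Real.tan_eq_sin_div_cos] at ht
    have := (lt_div_iff₀ hcθ).mp ht
    linarith
  have hsinle : Real.sin θ ≤ θ := Real.sin_le hθ0.le
  have hcosge : 1 - θ ^ 2 / 2 ≤ Real.cos θ := Real.one_sub_sq_div_two_le_cos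
  have hNle : Real.sin θ - θ * Real.cos θ ≤ θ ^ 3 / 2 := by nlinarith
  have hsinge : 3 / 4 * θ ≤ Real.sin θ := by
    have := Real.sin_gt_sub_cube hθ0
    nlinarith
  -- bound on g
  have hDpos : 0 < 2 * θ * Real.sin θ := by positivity
  obtain ⟨g, hgdef⟩ : ∃ g : ℝ,
      g = (Real.sin θ - θ * Real.cos θ) / (2 * θ * Real.sin θ) := ⟨_, rfl⟩
  have hg0 : 0 ≤ g := hgdef ▸ div_nonneg hN0 hDpos.le
  have hgle : g ≤ θ / 3 := by
    have h1 : g ≤ (θ ^ 3 / 2) / (3 / 2 * θ ^ 2) := by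
      rw [hgdef]
      apply div_le_div₀ (by positivity) hNle (by positivity)
      nlinarith
    have h2 : (θ ^ 3 / 2) / (3 / 2 * θ ^ 2) = θ / 3 := by
      field_simp
    linarith
  -- rewrite the expression
  have h2Mθ : 2 * (M : ℝ) * θ = 2 * tstar := by rw [mul_assoc, hMθ]
  have hE : A - M * b ^ 2 * (1 - Real.sin (2 * tstar) / (2 * tstar)) =
      a ^ 2 * M * Real.sin θ ^ 2 + b ^ 2 * Real.sin (2 * tstar) * g := by
    rw [hAdef]
    have hMne : (M : ℝ) ≠ 0 := ne_of_gt hMR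
    have hsne : Real.sin θ ≠ 0 := ne_of_gt hsθ
    have hθne : θ ≠ 0 := ne_of_gt hθ0
    rw [h2Mθ, Real.sin_two_mul θ, hgdef, ← hMθ]
    have hMθne : (M : ℝ) * θ ≠ 0 := mul_ne_zero hMne hθne
    field_simp
    ring
  rw [hE]
  have hsabs : |Real.sin (2 * tstar)| ≤ 1 := Real.abs_sin_le_one _
  have habs1 : Real.sin (2 * tstar) ≤ 1 := (abs_le.mp hsabs).2
  have habs2 : -1 ≤ Real.sin (2 * tstar) := (abs_le.mp hsabs).1
  have hMne : (M : ℝ) ≠ 0 := ne_of_gt hMR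
  have hterm1a : 0 ≤ a ^ 2 * M * Real.sin θ ^ 2 := by positivity
  have hterm1b : a ^ 2 * M * Real.sin θ ^ 2 ≤ a ^ 2 * tstar ^ 2 / M := by
    have h1 : Real.sin θ ^ 2 ≤ θ ^ 2 := pow_le_pow_left₀ hsθ.le hsinle 2
    have h2 : a ^ 2 * M * θ ^ 2 = a ^ 2 * tstar ^ 2 / M := by
      rw [← hMθ]; field_simp
    calc a ^ 2 * M * Real.sin θ ^ 2 ≤ a ^ 2 * M * θ ^ 2 :=
          mul_le_mul_of_nonneg_left h1 (by positivity)
      _ = a ^ 2 * tstar ^ 2 / M := h2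
  have hgle' : g ≤ tstar / (3 * M) := by
    have h3 : tstar / (3 * M) = θ / 3 := by
      rw [← hMθ]; field_simp
    rw [h3]; exact hgle
  have hterm2a : -(b ^ 2 * tstar / 3) / M ≤ b ^ 2 * Real.sin (2 * tstar) * g := by
    have hp : 0 ≤ b ^ 2 * g * (Real.sin (2 * tstar) + 1) :=
      mul_nonneg (mul_nonneg (sq_nonneg b) hg0) (by linarith)
    have h1 : b ^ 2 * Real.sin (2 * tstar) * g ≥ -(b ^ 2 * g) := by nlinarith [hp]
    have h2 : b ^ 2 * g ≤ b ^ 2 * (tstar / (3 * M)) :=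
      mul_le_mul_of_nonneg_left hgle' (sq_nonneg b)
    have h3 : b ^ 2 * (tstar / (3 * M)) = b ^ 2 * tstar / 3 / M := by ring
    have h4 : -(b ^ 2 * tstar / 3) / (M : ℝ) = -(b ^ 2 * tstar / 3 / M) := by ring
    rw [h4]
    linarith [h2, h3]
  have hterm2b : b ^ 2 * Real.sin (2 * tstar) * g ≤ b ^ 2 * tstar / 3 / M := by
    have hp : 0 ≤ b ^ 2 * g * (1 - Real.sin (2 * tstar)) :=
      mul_nonneg (mul_nonneg (sq_nonneg b) hg0) (by linarith)
    have h1 : b ^ 2 * Real.sin (2 * tstar) * g ≤ b ^ 2 * g := by nlinarith [hp]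
    have h2 : b ^ 2 * g ≤ b ^ 2 * (tstar / (3 * M)) :=
      mul_le_mul_of_nonneg_left hgle' (sq_nonneg b)
    have h3 : b ^ 2 * (tstar / (3 * M)) = b ^ 2 * tstar / 3 / M := by ring
    linarith [h2, h3]
  have h1M : 0 < 1 / (M : ℝ) := by positivity
  have keym : -(b ^ 2 * tstar / 3 + 1) / M = -(b ^ 2 * tstar / 3) / M - 1 / M := by
    ring
  have keyp : (a ^ 2 * tstar ^ 2 + b ^ 2 * tstar / 3 + 1) / M
      = a ^ 2 * tstar ^ 2 / M + b ^ 2 * tstar / 3 / M + 1 / M := by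
    ring
  constructor
  · rw [keym]
    have : -(b ^ 2 * tstar / 3) / M = -(b ^ 2 * tstar / 3 / M) := by ring
    linarith [this, hterm2a]
  · rw [keyp]
    linarith
end

section
/- Let λ₊ > 1, λ₋ = λ₊^{-1}, and ζ(m) = (λ₊^m − λ₋^m)/(λ₊ − λ₋). Then for any reals a, b, the sum ∑_{n=0}^{M−1} (a² + b²·ζ(M−n−1)² + b²·ζ(M−n)²) equals (M·a² + b²/(λ₊−λ₋)²·(ζ(M+1)² − ζ(M−1)² − 4M)). -/
theorem stmt14 (lam : ℝ) (hlam : 1 < lam) (ζ : ℕ → ℝ)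
    (hζ : ∀ m : ℕ, ζ m = (lam ^ m - lam⁻¹ ^ m) / (lam - lam⁻¹))
    (a b : ℝ) (M : ℕ) (hM : 1 ≤ M) :
    (∑ n ∈ Finset.range M,
        (a ^ 2 + b ^ 2 * (ζ (M - n - 1)) ^ 2 + b ^ 2 * (ζ (M - n)) ^ 2)) =
      M * a ^ 2 + b ^ 2 / (lam - lam⁻¹) ^ 2 *
        ((ζ (M + 1)) ^ 2 - (ζ (M - 1)) ^ 2 - 4 * M) := by
  have hl0 : lam ≠ 0 := by positivity
  have hl1 : lam * lam⁻¹ = 1 := mul_inv_cancel₀ hl0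
  have hd : lam - lam⁻¹ ≠ 0 := by
    have : lam⁻¹ < 1 := by
      rw [inv_lt_one_iff₀]; right; exact hlam
    nlinarith
  have hd2 : (lam - lam⁻¹) ^ 2 ≠ 0 := pow_ne_zero _ hd
  -- key algebraic identity
  have poly : ∀ L x y w : ℝ, L * y = 1 → x * w = 1 →
      ((L - y) ^ 2 + 1) * ((L * x - y * w) ^ 2 + (L ^ 2 * x - y ^ 2 * w) ^ 2)
        + 4 * (L - y) ^ 2 - (L ^ 3 * x - y ^ 3 * w) ^ 2 - (x - w) ^ 2 = 0 := by
    intro L x y w h1 h2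
    linear_combination
      (-8 + w ^ 2 + 6 * x * w + x ^ 2 - y ^ 2 * w ^ 2 - 4 * y ^ 2 * x * w
        - 2 * y ^ 4 * w ^ 2 + L * y * w ^ 2 + 8 * L * y * x * w + L * y * x ^ 2
        + L * y ^ 3 * w ^ 2 - 2 * L * y ^ 3 * x * w - 4 * L ^ 2 * x * w
        - L ^ 2 * x ^ 2 + 6 * L ^ 2 * y ^ 2 * x * w - 2 * L ^ 3 * y * x * w
        + L ^ 3 * y * x ^ 2 - 2 * L ^ 4 * x ^ 2) * h1
      + (8 - 4 * y ^ 2 - 4 * L ^ 2) * h2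
  have key : ∀ m : ℕ, (lam - lam⁻¹) ^ 2 * ((ζ (m + 1)) ^ 2 + (ζ (m + 2)) ^ 2)
      = ((ζ (m + 3)) ^ 2 - (ζ (m + 1)) ^ 2 - 4) - ((ζ (m + 2)) ^ 2 - (ζ m) ^ 2) := by
    intro m
    have hx : lam ^ m ≠ 0 := pow_ne_zero _ hl0
    have hx1 : lam ^ m * (lam ^ m)⁻¹ = 1 := mul_inv_cancel₀ hx
    have g : ∀ k : ℕ, (lam - lam⁻¹) * ζ (m + k)
        = lam ^ k * lam ^ m - lam⁻¹ ^ k * (lam ^ m)⁻¹ := by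
      intro k
      rw [hζ, mul_comm, div_mul_cancel₀ _ hd, pow_add, pow_add, inv_pow]
      ring
    have g2 : ∀ k : ℕ, (lam - lam⁻¹) ^ 2 * (ζ (m + k)) ^ 2
        = (lam ^ k * lam ^ m - lam⁻¹ ^ k * (lam ^ m)⁻¹) ^ 2 := by
      intro k; rw [← mul_pow, g]
    have G0 := g2 0
    have G1 := g2 1
    have G2 := g2 2
    have G3 := g2 3
    simp only [Nat.add_zero] at G0
    have hp := poly lam (lam ^ m) lam⁻¹ (lam ^ m)⁻¹ hl1 hx1
    apply mul_left_cancel₀ hd2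
    linear_combination ((lam - lam⁻¹) ^ 2 + 1) * G1 + ((lam - lam⁻¹) ^ 2 + 1) * G2
      - G3 - G0 + hp
  -- reindex
  have hre : (∑ n ∈ Finset.range M,
        (a ^ 2 + b ^ 2 * (ζ (M - n - 1)) ^ 2 + b ^ 2 * (ζ (M - n)) ^ 2)) =
      ∑ k ∈ Finset.range M, (a ^ 2 + b ^ 2 * (ζ k) ^ 2 + b ^ 2 * (ζ (k + 1)) ^ 2) := by
    rw [← Finset.sum_range_reflect]
    apply Finset.sum_congr rfl
    intro i hi
    have hi' : i < M := Finset.mem_range.mp hi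
    have d1 : M - (M - 1 - i) - 1 = i := by omega
    have d2 : M - (M - 1 - i) = i + 1 := by omega
    rw [d1, d2]
  rw [hre]
  clear hre
  induction M, hM using Nat.le_induction with
  | base =>
      have hz0 : ζ 0 = 0 := by simp [hζ]
      have hz1 : ζ 1 = 1 := by simp [hζ, div_self hd]
      have hz2 : ζ 2 = lam + lam⁻¹ := by
        rw [hζ]
        rw [div_eq_iff hd]
        ring
      simp only [Finset.sum_range_one, hz0, hz1, hz2]
      have hb : ((lam + lam⁻¹) ^ 2 - 4) / (lam - lam⁻¹) ^ 2 = 1 := by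
        rw [div_eq_iff hd2]
        linear_combination 4 * hl1
      push_cast
      linear_combination (-(b ^ 2)) * hb
  | succ n hn ih =>
      obtain ⟨m, rfl⟩ : ∃ m, n = m + 1 := ⟨n - 1, by omega⟩
      rw [Finset.sum_range_succ, ih]
      simp only [Nat.add_sub_cancel]
      rw [show m + 1 + 1 = m + 2 from rfl, show m + 1 + 1 + 1 = m + 3 from rfl]
      have hk' : (ζ (m + 1)) ^ 2 + (ζ (m + 2)) ^ 2 =
          ((ζ (m + 3)) ^ 2 - (ζ (m + 1)) ^ 2 - 4 - ((ζ (m + 2)) ^ 2 - (ζ m) ^ 2))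
            / (lam - lam⁻¹) ^ 2 := by
        rw [eq_div_iff hd2]
        linear_combination key m
      push_cast
      linear_combination b ^ 2 * hk'
end
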